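/- Let the strategy profile (M, c̃, r₀) of the Submodular Mafia Hitting Set Game be a pure Nash equilibrium. Then M is a hitting set (M ∩ S ≠ ∅ for every S ∈ 𝓔), ∑_{v∈M} c̃(v) = C(M), and C(M) ≤ d·C(M*) for every hitting set M*; that is, the price of anarchy of the Submodular Mafia Hitting Set Game is at most d. -/

import Mathlib

open Finset
open scoped Classical

namespace MafiaSub

variable {V : Type*} [Fintype V] [DecidableEq V]

noncomputable section

/-- `ct` lies in the submodular base polyhedron `B(C)`:
nonnegative, `∑_{u∈Z} ct u ≤ C Z` for every proper subset `Z ⊊ V`, and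
`∑_{u∈V} ct u = C V`. -/
def InBase (C : Finset V → ℝ) (ct : V → ℝ) : Prop :=
  (∀ v, 0 ≤ ct v) ∧
  (∀ Z : Finset V, Z ≠ Finset.univ → ∑ u ∈ Z, ct u ≤ C Z) ∧
  ∑ u : V, ct u = C Finset.univ

/-- Valid normalized ransoms: nonnegative, `r₀ m S = 0` unless `m` is a mafioso belonging
to the club `S ∈ 𝓔`, and every mafioso's normalized ransoms sum to `1`. -/
def ValidR0 (E : Finset (Finset V)) (M : Finset V) (r₀ : V → Finset V → ℝ) : Prop :=
  (∀ m S, 0 ≤ r₀ m S) ∧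
  (∀ m S, m ∉ M ∨ m ∉ S ∨ S ∉ E → r₀ m S = 0) ∧
  (∀ m ∈ M, ∑ S ∈ E.filter (fun S => m ∈ S), r₀ m S = 1)

/-- The demand `D(v) = (1/(d-1)) ∑_{S ∋ v} ∑_{m ∈ (M∩S)∖{v}} r(m,S)` asked from agent `v`,
where `r` are the actual ransoms. -/
def demand (d : ℕ) (E : Finset (Finset V)) (M : Finset V)
    (r : V → Finset V → ℝ) (v : V) : ℝ :=
  (1 / ((d : ℝ) - 1)) * ∑ S ∈ E.filter (fun S => v ∈ S), ∑ m ∈ (M ∩ S).erase v, r m S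

/-- Utility of a vertex agent `v`, with budgets `ct` and actual ransoms `r`
(as in the Mafia Hitting Set Game). -/
def vertexUtility (d : ℕ) (E : Finset (Finset V)) (ct : V → ℝ) (T : ℝ)
    (M : Finset V) (r : V → Finset V → ℝ) (v : V) : ℝ :=
  if v ∈ M then
    -ct v +
      (∑ S ∈ E.filter (fun S => v ∈ S),
        (r v S / ((d : ℝ) - 1)) *
          ((((S.filter fun u => ¬(u ∈ M ∧ ct u < demand d E M r u)).erase v).card : ℝ) +
            ∑ u ∈ (S.filter fun u => u ∈ M ∧ ct u < demand d E M r u).erase v,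
              ct u / demand d E M r u)) -
      min (demand d E M r v) (ct v)
  else
    -demand d E M r v - (if ∃ S ∈ E, v ∈ S ∧ M ∩ S = ∅ then T else 0)

/-- `(M', r₀')` is a unilateral deviation of vertex agent `v` from `(M, r₀)`. -/
def Deviation (v : V) (M M' : Finset V) (r₀ r₀' : V → Finset V → ℝ) : Prop :=
  (∀ u, u ≠ v → (u ∈ M' ↔ u ∈ M)) ∧ ∀ u S, u ≠ v → r₀' u S = r₀ u S

/-- `(M, ct, r₀)` is a pure Nash equilibrium of the Submodular Mafia Hitting Set Game:
the profile is valid (the Godfather's budget vector `ct` lies in `B(C)` and the normalized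
ransoms are valid), no vertex agent can strictly increase his utility by a unilateral
deviation, and the Godfather cannot strictly increase his utility `∑_{v∈M} ct v` by choosing
another budget vector in `B(C)`. -/
def IsNashEq (d : ℕ) (E : Finset (Finset V)) (C : Finset V → ℝ) (T : ℝ)
    (ct : V → ℝ) (M : Finset V) (r₀ : V → Finset V → ℝ) : Prop :=
  InBase C ct ∧ ValidR0 E M r₀ ∧
  (∀ (v : V) (M' : Finset V) (r₀' : V → Finset V → ℝ),
      ValidR0 E M' r₀' → Deviation v M M' r₀ r₀' →
        vertexUtility d E ct T M' (fun m S => r₀' m S * ct m) v ≤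
          vertexUtility d E ct T M (fun m S => r₀ m S * ct m) v) ∧
  (∀ ct' : V → ℝ, InBase C ct' → ∑ v ∈ M, ct' v ≤ ∑ v ∈ M, ct v)

end

end MafiaSub

/-!
At an equilibrium every club contains a mafioso: otherwise a member of an unhit club would escape
the penalty `T` by joining the mafia and charging that club alone. The Godfather's best response
earns `C M`, because the greedy algorithm yields a base vector saturating `M`.

For the price of anarchy, let `L u` be the total ransom charged in the clubs through `u`; it is
`(d - 1) D u + c̃ u` for a mafioso and `(d - 1) D u` for a civilian. Each mafioso can secure
utility `-D` (by quitting, or by charging a club he hits alone), while the utilities of the mafia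
sum to exactly `-∑ D`; so each mafioso has utility `-D`, which rules out protected mafiosi: the
one paying the smallest fraction of his demand would earn too little. A civilian `v` with
`L v > d c̃ v` would gain by joining and splitting his ransom in proportion to the ransom already
charged in his clubs. Hence `L ≤ d c̃` everywhere, and as every club meets a hitting set `M*`,
`C M = ∑_S ∑_{m ∈ M ∩ S} r m S ≤ ∑_{y ∈ M*} L y ≤ d ∑_{y ∈ M*} c̃ y ≤ d C M*`.
-/

namespace MafiaSub

variable {V : Type*}

theorem InBase.sum_le [Fintype V] {C : Finset V → ℝ} {ct : V → ℝ} (h : InBase C ct) (Z : Finset V) :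
    ∑ u ∈ Z, ct u ≤ C Z := by
  by_cases hZ : Z = univ
  · rw [hZ, h.2.2]
  · exact h.2.1 Z hZ

theorem InBase.le_univ [Fintype V] {C : Finset V → ℝ} {ct : V → ℝ} (h : InBase C ct) (v : V) :
    ct v ≤ C univ := by
  rw [← h.2.2]
  exact single_le_sum (fun u _ => h.1 u) (mem_univ v)

section Greedy

variable [DecidableEq V]

/-- `w` is a base of the restriction `Z ↦ C (Z ∩ B)`, extended by zero outside `B`. -/
structure IsBaseOn (C : Finset V → ℝ) (B : Finset V) (w : V → ℝ) : Prop where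
  nonneg : ∀ v, 0 ≤ w v
  eq_zero_of_notMem : ∀ v, v ∉ B → w v = 0
  sum_le : ∀ Z : Finset V, ∑ u ∈ Z, w u ≤ C (Z ∩ B)
  sum_eq : ∑ u ∈ B, w u = C B

variable {C : Finset V → ℝ}

theorem isBaseOn_empty (hempty : C ∅ = 0) : IsBaseOn C ∅ 0 where
  nonneg _ := le_rfl
  eq_zero_of_notMem _ _ := rfl
  sum_le Z := by simp [hempty]
  sum_eq := by simp [hempty]

theorem IsBaseOn.insert_of_notMem (hmono : ∀ ⦃X Y : Finset V⦄, X ⊆ Y → C X ≤ C Y)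
    (hsub : ∀ X Y : Finset V, C (X ∩ Y) + C (X ∪ Y) ≤ C X + C Y)
    {B : Finset V} {w : V → ℝ} (hw : IsBaseOn C B w) {x : V} (hx : x ∉ B) :
    IsBaseOn C (insert x B) (w + Pi.single x (C (insert x B) - C B)) := by
  have hgain : 0 ≤ C (insert x B) - C B := sub_nonneg.2 (hmono (subset_insert x B))
  have hsum : ∀ Z : Finset V, ∑ u ∈ Z, (w + Pi.single x (C (insert x B) - C B) : V → ℝ) u =
      ∑ u ∈ Z, w u + if x ∈ Z then C (insert x B) - C B else 0 := fun Z => by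
    simp only [Pi.add_apply, sum_add_distrib, sum_pi_single']
  refine ⟨fun v => add_nonneg (hw.nonneg v) ?_, fun v hv => ?_, fun Z => ?_, ?_⟩
  · by_cases hv : v = x
    · subst hv; simpa using hgain
    · simp [hv]
  · have hvx : v ≠ x := fun h => hv (h ▸ mem_insert_self x B)
    simp [hvx, hw.eq_zero_of_notMem v (fun h => hv (mem_insert_of_mem h))]
  · rw [hsum]
    by_cases hxZ : x ∈ Z
    · have key := hsub (insert x (Z ∩ B)) B
      rw [insert_inter_of_notMem hx, inter_assoc, inter_self, insert_union,
        union_eq_right.2 inter_subset_right] at key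
      rw [if_pos hxZ, inter_insert_of_mem hxZ]
      linarith [hw.sum_le Z]
    · rw [if_neg hxZ, add_zero, inter_insert_of_notMem hxZ]
      exact hw.sum_le Z
  · rw [hsum, if_pos (mem_insert_self x B), sum_insert hx, hw.eq_zero_of_notMem x hx, hw.sum_eq]
    ring

theorem IsBaseOn.exists_extend (hmono : ∀ ⦃X Y : Finset V⦄, X ⊆ Y → C X ≤ C Y)
    (hsub : ∀ X Y : Finset V, C (X ∩ Y) + C (X ∪ Y) ≤ C X + C Y)
    {B : Finset V} {w : V → ℝ} (hw : IsBaseOn C B w) (s : Finset V) :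
    ∃ w' : V → ℝ, IsBaseOn C (B ∪ s) w' ∧ ∀ u ∈ B, w' u = w u := by
  induction s using Finset.induction_on with
  | empty => exact ⟨w, by simpa using hw, fun _ _ => rfl⟩
  | @insert x s _ ih =>
    obtain ⟨w', hw', hagree⟩ := ih
    rw [union_insert]
    by_cases hx : x ∈ B ∪ s
    · exact ⟨w', by rwa [insert_eq_of_mem hx], hagree⟩
    refine ⟨_, hw'.insert_of_notMem hmono hsub hx, fun u hu => ?_⟩
    have hux : u ≠ x := fun h => hx (mem_union_left s (h ▸ hu))
    simp [hux, hagree u hu]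

theorem IsBaseOn.inBase [Fintype V] {w : V → ℝ} (hw : IsBaseOn C univ w) : InBase C w :=
  ⟨hw.nonneg, fun Z _ => by simpa using hw.sum_le Z, hw.sum_eq⟩

/-- Edmonds' greedy algorithm, processing the elements of `A` first. -/
theorem exists_inBase_sum_eq [Fintype V] (hmono : ∀ ⦃X Y : Finset V⦄, X ⊆ Y → C X ≤ C Y)
    (hsub : ∀ X Y : Finset V, C (X ∩ Y) + C (X ∪ Y) ≤ C X + C Y) (hempty : C ∅ = 0)
    (A : Finset V) : ∃ w : V → ℝ, InBase C w ∧ ∑ u ∈ A, w u = C A := by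
  obtain ⟨wA, hwA, -⟩ := (isBaseOn_empty hempty).exists_extend hmono hsub A
  rw [empty_union] at hwA
  obtain ⟨w, hw, hagree⟩ := hwA.exists_extend hmono hsub univ
  rw [union_eq_right.2 (subset_univ A)] at hw
  exact ⟨w, hw.inBase, by rw [sum_congr rfl hagree, hwA.sum_eq]⟩

end Greedy

section Bookkeeping

variable [DecidableEq V] {d : ℕ} {E : Finset (Finset V)} {M : Finset V} {ct : V → ℝ}
  {r₀ : V → Finset V → ℝ}

noncomputable def ransom (ct : V → ℝ) (r₀ : V → Finset V → ℝ) : V → Finset V → ℝ :=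
  fun m S => r₀ m S * ct m

/-- The fraction of each unit of demand that `u` actually pays (`c̃(u)/D(u)` for protected `u`). -/
noncomputable def weight (d : ℕ) (E : Finset (Finset V)) (ct : V → ℝ) (M : Finset V)
    (r : V → Finset V → ℝ) (u : V) : ℝ :=
  if u ∈ M ∧ ct u < demand d E M r u then ct u / demand d E M r u else 1

/-- The income `F⁺(v)` of a mafioso. -/
noncomputable def income (d : ℕ) (E : Finset (Finset V)) (ct : V → ℝ) (M : Finset V)
    (r : V → Finset V → ℝ) (v : V) : ℝ :=
  ∑ S ∈ E.filter (v ∈ ·), r v S / ((d : ℝ) - 1) * ∑ u ∈ S.erase v, weight d E ct M r u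

noncomputable def clubLoad (E : Finset (Finset V)) (M : Finset V) (r : V → Finset V → ℝ)
    (u : V) : ℝ :=
  ∑ S ∈ E.filter (u ∈ ·), ∑ m ∈ M ∩ S, r m S

theorem vertexUtility_of_mem {T : ℝ} {r : V → Finset V → ℝ} {v : V} (hv : v ∈ M) :
    vertexUtility d E ct T M r v =
      -ct v + income d E ct M r v - min (demand d E M r v) (ct v) := by
  have hsplit : ∀ S : Finset V,
      (((S.filter fun u => ¬(u ∈ M ∧ ct u < demand d E M r u)).erase v).card : ℝ) +
        ∑ u ∈ (S.filter fun u => u ∈ M ∧ ct u < demand d E M r u).erase v,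
          ct u / demand d E M r u = ∑ u ∈ S.erase v, weight d E ct M r u := fun S => by
    unfold weight
    rw [sum_ite, filter_erase, filter_erase, sum_const, nsmul_eq_mul, mul_one,
      add_comm]
  simp only [vertexUtility, if_pos hv, hsplit, income]

theorem vertexUtility_of_notMem {T : ℝ} {r : V → Finset V → ℝ} {v : V} (hv : v ∉ M)
    (hhit : ∀ S ∈ E, (M ∩ S).Nonempty) : vertexUtility d E ct T M r v = -demand d E M r v := by
  have hpen : ¬∃ S ∈ E, v ∈ S ∧ M ∩ S = ∅ := fun ⟨S, hS, _, hMS⟩ =>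
    (hhit S hS).ne_empty hMS
  simp [vertexUtility, hv, hpen]

theorem demand_nonneg (hd : 2 ≤ d) {r : V → Finset V → ℝ} (hr : ∀ m S, 0 ≤ r m S) (v : V) :
    0 ≤ demand d E M r v := by
  have : (2 : ℝ) ≤ d := by exact_mod_cast hd
  exact mul_nonneg (one_div_nonneg.2 (by linarith))
    (sum_nonneg fun S _ => sum_nonneg fun m _ => hr m S)

theorem demand_congr {M' : Finset V} {r r' : V → Finset V → ℝ} {v : V}
    (hM : ∀ u, u ≠ v → (u ∈ M' ↔ u ∈ M)) (hr : ∀ m, m ≠ v → r' m = r m) :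
    demand d E M' r' v = demand d E M r v := by
  have hMS : ∀ S : Finset V, (M' ∩ S).erase v = (M ∩ S).erase v := fun S => by
    ext u
    simp only [mem_erase, mem_inter]
    constructor <;> rintro ⟨huv, hu, huS⟩ <;> simp_all
  refine congrArg _ (sum_congr rfl fun S _ => ?_)
  rw [hMS]
  exact sum_congr rfl fun m hm => by rw [hr m (ne_of_mem_erase hm)]

theorem weight_mul_demand {r : V → Finset V → ℝ} {u : V} (hct : 0 ≤ ct u) :
    weight d E ct M r u * demand d E M r u =
      if u ∈ M then min (demand d E M r u) (ct u) else demand d E M r u := by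
  by_cases hu : u ∈ M <;> by_cases hlt : ct u < demand d E M r u <;>
    simp only [weight, hu, hlt, true_and, false_and, if_true, if_false, one_mul]
  · rw [div_mul_cancel₀ _ (by linarith), min_eq_right hlt.le]
  · rw [min_eq_left (not_lt.1 hlt)]

theorem le_income (hd : 2 ≤ d) (hunif : ∀ S ∈ E, S.card = d) {r : V → Finset V → ℝ}
    (hr : ∀ m S, 0 ≤ r m S) {v : V} {c : ℝ}
    (hc : ∀ S ∈ E, v ∈ S → 0 < r v S → ∀ u ∈ S.erase v, c ≤ weight d E ct M r u) :
    c * ∑ S ∈ E.filter (v ∈ ·), r v S ≤ income d E ct M r v := by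
  have hd1 : (0 : ℝ) < d - 1 := by linarith [show (2 : ℝ) ≤ d by exact_mod_cast hd]
  rw [mul_sum]
  refine sum_le_sum fun S hS => ?_
  obtain ⟨hSE, hvS⟩ := mem_filter.1 hS
  rcases (hr v S).eq_or_lt with h0 | hpos
  · simp [← h0]
  have hcard : ((S.erase v).card : ℝ) = d - 1 := by
    rw [card_erase_of_mem hvS, hunif S hSE, Nat.cast_sub (by omega), Nat.cast_one]
  have hsum := card_nsmul_le_sum (S.erase v) _ c (hc S hSE hvS hpos)
  rw [nsmul_eq_mul, hcard] at hsum
  calc c * r v S = r v S / (d - 1) * ((d - 1) * c) := by field_simp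
    _ ≤ _ := mul_le_mul_of_nonneg_left hsum (div_nonneg hpos.le hd1.le)

theorem sum_sum_inter_comm (r : V → Finset V → ℝ) :
    ∑ S ∈ E, ∑ m ∈ M ∩ S, r m S = ∑ m ∈ M, ∑ S ∈ E.filter (m ∈ ·), r m S :=
  sum_comm' fun S m => by simp only [mem_inter, mem_filter]; tauto

theorem sum_le_sum_sum_filter_of_hitting {H : Finset V} (hH : ∀ S ∈ E, (H ∩ S).Nonempty)
    {f : Finset V → ℝ} (hf : ∀ S ∈ E, 0 ≤ f S) :
    ∑ S ∈ E, f S ≤ ∑ y ∈ H, ∑ S ∈ E.filter (y ∈ ·), f S := by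
  rw [sum_comm' (t' := E) (s' := fun S => H ∩ S) fun y S => by
    simp only [mem_filter, mem_inter]; tauto]
  refine sum_le_sum fun S hS => ?_
  rw [sum_const, nsmul_eq_mul]
  exact le_mul_of_one_le_left (hf S hS) (by exact_mod_cast (hH S hS).card_pos)

theorem clubLoad_nonneg {r : V → Finset V → ℝ} (hr : ∀ m S, 0 ≤ r m S) (u : V) :
    0 ≤ clubLoad E M r u :=
  sum_nonneg fun S _ => sum_nonneg fun m _ => hr m S

theorem sum_sum_sum_erase_comm [Fintype V] (f : V → Finset V → V → ℝ) :
    ∑ m ∈ M, ∑ S ∈ E.filter (m ∈ ·), ∑ u ∈ S.erase m, f m S u =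
      ∑ u, ∑ S ∈ E.filter (u ∈ ·), ∑ m ∈ (M ∩ S).erase u, f m S u := by
  rw [← sum_sum_inter_comm, sum_comm' (t' := E) (s' := fun S => (S : Finset V))]
  · refine sum_congr rfl fun S _ => sum_comm' fun m u => ?_
    simp only [mem_inter, mem_erase]
    tauto
  · intro u S
    simp [and_comm]

theorem sum_demand [Fintype V] (hd : 2 ≤ d) (hunif : ∀ S ∈ E, S.card = d)
    (r : V → Finset V → ℝ) :
    ∑ u, demand d E M r u = ∑ m ∈ M, ∑ S ∈ E.filter (m ∈ ·), r m S := by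
  have hd1 : (d : ℝ) - 1 ≠ 0 := by linarith [show (2 : ℝ) ≤ d by exact_mod_cast hd]
  simp only [demand, ← mul_sum]
  rw [← sum_sum_sum_erase_comm (fun m S _ => r m S), mul_sum]
  refine sum_congr rfl fun m _ => ?_
  rw [mul_sum]
  refine sum_congr rfl fun S hS => ?_
  obtain ⟨hSE, hmS⟩ := mem_filter.1 hS
  rw [sum_const, card_erase_of_mem hmS, hunif S hSE, nsmul_eq_mul, Nat.cast_sub (by omega),
    Nat.cast_one]
  field_simp

theorem sum_income [Fintype V] (r : V → Finset V → ℝ) :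
    ∑ m ∈ M, income d E ct M r m = ∑ u, weight d E ct M r u * demand d E M r u := by
  simp only [income, demand, mul_sum]
  rw [sum_sum_sum_erase_comm (fun m S u => r m S / ((d : ℝ) - 1) * weight d E ct M r u)]
  refine sum_congr rfl fun u _ => sum_congr rfl fun S _ => sum_congr rfl fun m _ => ?_
  ring

theorem ValidR0.ransom_nonneg (h : ValidR0 E M r₀) (hct : ∀ v, 0 ≤ ct v) (m : V)
    (S : Finset V) : 0 ≤ ransom ct r₀ m S :=
  mul_nonneg (h.1 m S) (hct m)

theorem ValidR0.sum_ransom (h : ValidR0 E M r₀) {m : V} (hm : m ∈ M) :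
    ∑ S ∈ E.filter (m ∈ ·), ransom ct r₀ m S = ct m := by
  simp only [ransom, ← sum_mul, h.2.2 m hm, one_mul]

theorem sub_one_mul_demand (hd : 2 ≤ d) (r : V → Finset V → ℝ) (u : V) :
    ((d : ℝ) - 1) * demand d E M r u =
      ∑ S ∈ E.filter (u ∈ ·), ∑ m ∈ (M ∩ S).erase u, r m S := by
  have : (2 : ℝ) ≤ d := by exact_mod_cast hd
  rw [demand, ← mul_assoc, mul_one_div_cancel (by linarith), one_mul]

theorem ValidR0.clubLoad_eq (h : ValidR0 E M r₀) (hd : 2 ≤ d) (u : V) :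
    clubLoad E M (ransom ct r₀) u =
      ((d : ℝ) - 1) * demand d E M (ransom ct r₀) u + if u ∈ M then ct u else 0 := by
  rw [sub_one_mul_demand hd, clubLoad]
  by_cases hu : u ∈ M
  · rw [if_pos hu, ← h.sum_ransom (ct := ct) hu, ← sum_add_distrib]
    exact sum_congr rfl fun S hS =>
      (sum_erase_add _ _ (mem_inter.2 ⟨hu, (mem_filter.1 hS).2⟩)).symm
  · rw [if_neg hu, add_zero]
    exact sum_congr rfl fun S _ => by
      rw [erase_eq_of_notMem fun h => hu (mem_inter.1 h).1]

end Bookkeeping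

section Deviations

variable [DecidableEq V] {d : ℕ} {E : Finset (Finset V)} {M : Finset V} {ct : V → ℝ}
  {r₀ : V → Finset V → ℝ}

theorem ValidR0.update_insert (h : ValidR0 E M r₀) {v : V} {ρ : Finset V → ℝ}
    (hρ0 : ∀ S, 0 ≤ ρ S) (hρE : ∀ S, v ∉ S ∨ S ∉ E → ρ S = 0)
    (hρ1 : ∑ S ∈ E.filter (v ∈ ·), ρ S = 1) :
    ValidR0 E (insert v M) (Function.update r₀ v ρ) := by
  refine ⟨fun m S => ?_, fun m S hm => ?_, fun m hm => ?_⟩ <;> by_cases hmv : m = v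
  · subst hmv; simpa using hρ0 S
  · simpa [hmv] using h.1 m S
  · subst hmv; simpa using hρE S (by simpa using hm)
  · simpa [hmv] using h.2.1 m S (by simpa [hmv] using hm)
  · subst hmv; simpa using hρ1
  · simpa [hmv] using h.2.2 m (by simpa [hmv] using hm)

theorem ValidR0.update_erase (h : ValidR0 E M r₀) (v : V) :
    ValidR0 E (M.erase v) (Function.update r₀ v 0) := by
  refine ⟨fun m S => ?_, fun m S hm => ?_, fun m hm => ?_⟩ <;> by_cases hmv : m = v
  · simp [hmv]
  · simpa [hmv] using h.1 m S
  · simp [hmv]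
  · simpa [hmv] using h.2.1 m S (by simpa [hmv] using hm)
  · simp [hmv] at hm
  · simpa [hmv] using h.2.2 m (by simpa [hmv] using hm)

theorem ransom_update_of_ne {ct : V → ℝ} {r₀ : V → Finset V → ℝ} {m v : V} (h : m ≠ v)
    (ρ : Finset V → ℝ) : ransom ct (Function.update r₀ v ρ) m = ransom ct r₀ m := by
  unfold ransom
  rw [Function.update_of_ne h]

theorem sub_one_mul_demand_insert_of_ne (hd : 2 ≤ d) {r r' : V → Finset V → ℝ} {u v : V}
    (hvM : v ∉ M) (huv : u ≠ v) (hr : ∀ m, m ≠ v → r' m = r m) (hr'v : ∀ S, v ∉ S → r' v S = 0) :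
    ((d : ℝ) - 1) * demand d E (insert v M) r' u =
      ((d : ℝ) - 1) * demand d E M r u + ∑ S ∈ E.filter (u ∈ ·), r' v S := by
  rw [sub_one_mul_demand hd, sub_one_mul_demand hd, ← sum_add_distrib]
  refine sum_congr rfl fun S _ => ?_
  have hr'M : ∑ m ∈ (M ∩ S).erase u, r' m S = ∑ m ∈ (M ∩ S).erase u, r m S :=
    sum_congr rfl fun m hm => by
      rw [hr m fun hmv => hvM (hmv ▸ (mem_inter.1 (mem_of_mem_erase hm)).1)]
  by_cases hvS : v ∈ S
  · rw [insert_inter_of_mem hvS, erase_insert_of_ne huv.symm, sum_insert fun h =>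
      hvM (mem_inter.1 (mem_of_mem_erase h)).1, hr'M, add_comm]
  · rw [insert_inter_of_notMem hvS, hr'M, hr'v S hvS, add_zero]

theorem le_weight_insert (hd : 2 ≤ d) {r r' : V → Finset V → ℝ} {u v : V} (hvM : v ∉ M)
    (huv : u ≠ v) (hr : ∀ m, m ≠ v → r' m = r m) (hr'v : ∀ S, v ∉ S → r' v S = 0)
    (hDu : u ∈ M → demand d E M r u ≤ ct u) (hDu0 : 0 ≤ demand d E M r u)
    (hgain : d * ∑ S ∈ E.filter (u ∈ ·), r' v S ≤ ((d : ℝ) - 1) * demand d E M r u + ct u) :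
    ((d : ℝ) - 2) / (d - 1) ≤ weight d E ct (insert v M) r' u := by
  have hd2 : (2 : ℝ) ≤ d := by exact_mod_cast hd
  have hd1 : (0 : ℝ) < d - 1 := by linarith
  unfold weight
  split_ifs with hprot
  · obtain ⟨hu, hlt⟩ := hprot
    have hu : u ∈ M := (mem_insert.1 hu).resolve_left huv
    have hnew := sub_one_mul_demand_insert_of_ne (E := E) hd hvM huv hr hr'v
    set D' := demand d E (insert v M) r' u
    set a := demand d E M r u
    set X := ∑ S ∈ E.filter (u ∈ ·), r' v S
    have hac := hDu hu
    have hD' : 0 < D' := by linarith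
    rw [div_le_div_iff₀ hd1 hD']
    -- `d (d-1) D' ≤ (d² - 1) a + ct u ≤ d² ct u`, and `(d - 2) d² ≤ d (d - 1)²`
    have h1 : (d : ℝ) * (d - 1) * D' ≤ (d ^ 2 - 1) * a + ct u := by nlinarith
    have h2 : ((d : ℝ) - 2) * ((d ^ 2 - 1) * a + ct u) ≤ (d - 2) * d ^ 2 * ct u := by
      have : (0 : ℝ) ≤ (d - 2) * (d ^ 2 - 1) := mul_nonneg (by linarith) (by nlinarith)
      nlinarith
    have h3 : (d : ℝ) * (d - 1) * ((d - 2) * D') ≤ d * (d - 1) * (ct u * (d - 1)) := by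
      nlinarith
    exact le_of_mul_le_mul_left h3 (by positivity)
  · rw [div_le_one hd1]
    linarith

end Deviations

section ProportionalSplit

variable [DecidableEq V] {E : Finset (Finset V)} {M : Finset V} {r : V → Finset V → ℝ} {v : V}

/-- How a civilian joining the mafia spreads his ransom: over his clubs, in proportion to the
ransom already collected in each. -/
noncomputable def proportionalSplit (E : Finset (Finset V)) (M : Finset V)
    (r : V → Finset V → ℝ) (v : V) : Finset V → ℝ :=
  fun S => if S ∈ E ∧ v ∈ S then (∑ m ∈ M ∩ S, r m S) / clubLoad E M r v else 0

theorem proportionalSplit_nonneg (hr : ∀ m S, 0 ≤ r m S) (S : Finset V) :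
    0 ≤ proportionalSplit E M r v S := by
  unfold proportionalSplit
  split_ifs
  exacts [div_nonneg (sum_nonneg fun m _ => hr m S) (clubLoad_nonneg hr v), le_rfl]

theorem proportionalSplit_eq_zero {S : Finset V} (h : v ∉ S ∨ S ∉ E) :
    proportionalSplit E M r v S = 0 :=
  if_neg fun h' => h.elim (· h'.2) (· h'.1)

theorem sum_proportionalSplit (h : clubLoad E M r v ≠ 0) :
    ∑ S ∈ E.filter (v ∈ ·), proportionalSplit E M r v S = 1 := by
  rw [← div_self h, clubLoad, sum_div]
  exact sum_congr rfl fun S hS => if_pos (mem_filter.1 hS)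

theorem mul_sum_proportionalSplit_le (hr : ∀ m S, 0 ≤ r m S) (u : V) :
    clubLoad E M r v * ∑ S ∈ E.filter (u ∈ ·), proportionalSplit E M r v S ≤
      clubLoad E M r u := by
  rcases (clubLoad_nonneg hr v).eq_or_lt with h0 | hpos
  · rw [← h0, zero_mul]
    exact clubLoad_nonneg hr u
  rw [mul_sum]
  refine sum_le_sum fun S _ => ?_
  unfold proportionalSplit
  split_ifs
  exacts [(mul_div_cancel₀ _ hpos.ne').le, by
    rw [mul_zero]; exact sum_nonneg fun m _ => hr m S]

end ProportionalSplit

section Equilibrium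

variable [Fintype V] [DecidableEq V] {d : ℕ} {E : Finset (Finset V)} {C : Finset V → ℝ} {T : ℝ}
  {ct : V → ℝ} {M : Finset V} {r₀ : V → Finset V → ℝ}

theorem IsNashEq.utility_update_le (hnash : IsNashEq d E C T ct M r₀) {v : V} {M' : Finset V}
    {ρ : Finset V → ℝ} (hM : ∀ u, u ≠ v → (u ∈ M' ↔ u ∈ M))
    (hval : ValidR0 E M' (Function.update r₀ v ρ)) :
    vertexUtility d E ct T M' (ransom ct (Function.update r₀ v ρ)) v ≤
      vertexUtility d E ct T M (ransom ct r₀) v :=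
  hnash.2.2.1 v M' _ hval ⟨hM, fun u S hu => by rw [Function.update_of_ne hu]⟩

/-- Putting all of one's ransom on a club with no other mafioso earns the full budget back. -/
theorem IsNashEq.neg_min_le_utility (hnash : IsNashEq d E C T ct M r₀) (hd : 2 ≤ d)
    (hunif : ∀ S ∈ E, S.card = d) {v : V} {S : Finset V} (hS : S ∈ E) (hvS : v ∈ S)
    (hsole : ∀ u ∈ S, u ∈ M → u = v) :
    -min (demand d E M (ransom ct r₀) v) (ct v) ≤ vertexUtility d E ct T M (ransom ct r₀) v := by
  have hval := hnash.2.1.update_insert (v := v) (ρ := Pi.single S 1)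
    (fun S' => by by_cases h : S' = S <;> simp [h])
    (fun S' h => Pi.single_eq_of_ne (by rintro rfl; tauto) 1)
    (by rw [sum_pi_single', if_pos (mem_filter.2 ⟨hS, hvS⟩)])
  have hM : ∀ u, u ≠ v → (u ∈ insert v M ↔ u ∈ M) := fun u hu => by simp [hu]
  have hle := hnash.utility_update_le hM hval
  rw [vertexUtility_of_mem (mem_insert_self v M),
    demand_congr (r := ransom ct r₀) hM fun m hm => ransom_update_of_ne hm _] at hle
  have hinc := le_income (ct := ct) (M := insert v M) (v := v) (c := 1) hd hunif
    (hval.ransom_nonneg hnash.1.1) fun S' _ _ hpos u hu => by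
      obtain rfl : S' = S := by
        by_contra h
        simp [ransom, h] at hpos
      have hu : u ∉ insert v M := by
        simpa [ne_of_mem_erase hu] using
          fun huM => ne_of_mem_erase hu (hsole u (mem_of_mem_erase hu) huM)
      simp [weight, hu]
  rw [one_mul, hval.sum_ransom (mem_insert_self v M)] at hinc
  linarith

theorem IsNashEq.hits (hnash : IsNashEq d E C T ct M r₀) (hd : 2 ≤ d)
    (hunif : ∀ S ∈ E, S.card = d) (hT : 2 * C univ < T) : ∀ S ∈ E, (M ∩ S).Nonempty := by
  intro S hS
  by_contra hMS
  rw [not_nonempty_iff_eq_empty] at hMS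
  obtain ⟨v, hvS⟩ : S.Nonempty := card_pos.1 (by rw [hunif S hS]; omega)
  have hsole : ∀ u ∈ S, u ∈ M → u = v := fun u huS huM => by
    simpa [hMS] using mem_inter.2 ⟨huM, huS⟩
  have hv : v ∉ M := fun hv => by simpa [hMS] using mem_inter.2 ⟨hv, hvS⟩
  have hle := hnash.neg_min_le_utility hd hunif hS hvS hsole
  have hpen : vertexUtility d E ct T M (ransom ct r₀) v =
      -demand d E M (ransom ct r₀) v - T := by
    simp only [vertexUtility, if_neg hv, if_pos (⟨S, hS, hvS, hMS⟩ : ∃ S ∈ E, v ∈ S ∧ M ∩ S = ∅)]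
  have hD := demand_nonneg (E := E) (M := M) hd (hnash.2.1.ransom_nonneg hnash.1.1) v
  linarith [hnash.1.le_univ v, hnash.1.1 v, min_le_right (demand d E M (ransom ct r₀) v) (ct v)]

theorem IsNashEq.sum_eq (hnash : IsNashEq d E C T ct M r₀)
    (hmono : ∀ ⦃X Y : Finset V⦄, X ⊆ Y → C X ≤ C Y)
    (hsub : ∀ X Y : Finset V, C (X ∩ Y) + C (X ∪ Y) ≤ C X + C Y) (hempty : C ∅ = 0) :
    ∑ v ∈ M, ct v = C M := by
  obtain ⟨w, hw, hwM⟩ := exists_inBase_sum_eq hmono hsub hempty M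
  exact le_antisymm (hnash.1.sum_le M) (hwM ▸ hnash.2.2.2 w hw)

theorem IsNashEq.neg_demand_le_utility (hnash : IsNashEq d E C T ct M r₀) (hd : 2 ≤ d)
    (hunif : ∀ S ∈ E, S.card = d) (hhit : ∀ S ∈ E, (M ∩ S).Nonempty) {m : V} (hm : m ∈ M) :
    -demand d E M (ransom ct r₀) m ≤ vertexUtility d E ct T M (ransom ct r₀) m := by
  by_cases hsole : ∃ S ∈ E, m ∈ S ∧ ∀ u ∈ S, u ∈ M → u = m
  · obtain ⟨S, hS, hmS, hsole⟩ := hsole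
    linarith [hnash.neg_min_le_utility hd hunif hS hmS hsole,
      min_le_left (demand d E M (ransom ct r₀) m) (ct m)]
  push Not at hsole
  -- otherwise `m` may quit: every club of `m` keeps another mafioso, so no penalty is due
  have hhit' : ∀ S ∈ E, (M.erase m ∩ S).Nonempty := by
    intro S hS
    by_cases hmS : m ∈ S
    · obtain ⟨u, huS, huM, hum⟩ := hsole S hS hmS
      exact ⟨u, by simp [*]⟩
    · obtain ⟨u, hu⟩ := hhit S hS
      obtain ⟨huM, huS⟩ := mem_inter.1 hu
      have hum : u ≠ m := fun h => hmS (h ▸ huS)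
      exact ⟨u, by simp [*]⟩
  have hM : ∀ u, u ≠ m → (u ∈ M.erase m ↔ u ∈ M) := fun u hu => by simp [hu]
  have hle := hnash.utility_update_le hM (hnash.2.1.update_erase m)
  rwa [vertexUtility_of_notMem (notMem_erase m M) hhit',
    demand_congr (r := ransom ct r₀) hM fun u hu => ransom_update_of_ne hu _] at hle

/-- Total income equals total payment, and total demand equals total ransom `∑_{m ∈ M} c̃ m`. -/
theorem sum_vertexUtility_of_mem (hd : 2 ≤ d) (hunif : ∀ S ∈ E, S.card = d)
    (hval : ValidR0 E M r₀) (hct : ∀ v, 0 ≤ ct v) (T : ℝ) :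
    ∑ m ∈ M, vertexUtility d E ct T M (ransom ct r₀) m =
      -∑ m ∈ M, demand d E M (ransom ct r₀) m := by
  set r := ransom ct r₀
  have hpaid : ∀ u, weight d E ct M r u * demand d E M r u =
      demand d E M r u - if u ∈ M then demand d E M r u - min (demand d E M r u) (ct u) else 0 :=
    fun u => by rw [weight_mul_demand (hct u)]; split_ifs <;> ring
  have hinc : ∑ m ∈ M, income d E ct M r m =
      ∑ m ∈ M, ct m - ∑ m ∈ M, (demand d E M r m - min (demand d E M r m) (ct m)) := by
    rw [sum_income, sum_congr rfl fun u _ => hpaid u, sum_sub_distrib, sum_ite_mem, univ_inter,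
      sum_demand hd hunif, sum_congr rfl fun m hm => hval.sum_ransom hm]
  rw [sum_congr rfl fun m hm => vertexUtility_of_mem hm]
  simp only [sum_sub_distrib, sum_add_distrib, sum_neg_distrib] at hinc ⊢
  linarith

theorem IsNashEq.utility_eq_neg_demand (hnash : IsNashEq d E C T ct M r₀) (hd : 2 ≤ d)
    (hunif : ∀ S ∈ E, S.card = d) (hhit : ∀ S ∈ E, (M ∩ S).Nonempty) {m : V} (hm : m ∈ M) :
    vertexUtility d E ct T M (ransom ct r₀) m = -demand d E M (ransom ct r₀) m := by
  have hsum : ∑ m ∈ M, (vertexUtility d E ct T M (ransom ct r₀) m +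
      demand d E M (ransom ct r₀) m) = 0 := by
    rw [sum_add_distrib, sum_vertexUtility_of_mem hd hunif hnash.2.1 hnash.1.1]
    ring
  have := (sum_eq_zero_iff_of_nonneg fun m hm => ?_).1 hsum m hm
  · linarith
  · linarith [hnash.neg_demand_le_utility hd hunif hhit hm]

theorem IsNashEq.demand_le_of_mem (hnash : IsNashEq d E C T ct M r₀) (hd : 2 ≤ d)
    (hunif : ∀ S ∈ E, S.card = d) (hhit : ∀ S ∈ E, (M ∩ S).Nonempty) {m : V} (hm : m ∈ M) :
    demand d E M (ransom ct r₀) m ≤ ct m := by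
  set r := ransom ct r₀
  have hct := hnash.1.1
  by_contra! hlt
  -- the vertex paying the smallest fraction of its demand is then a protected mafioso ...
  obtain ⟨u, -, hmin⟩ := exists_min_image univ (weight d E ct M r) ⟨m, mem_univ m⟩
  have hwm : weight d E ct M r m < 1 := by
    rw [weight, if_pos ⟨hm, hlt⟩, div_lt_one (by linarith [hct m])]
    exact hlt
  have hu : u ∈ M ∧ ct u < demand d E M r u := by
    by_contra h
    linarith [hmin m (mem_univ m), show weight d E ct M r u = 1 from if_neg h]
  have hDu : 0 < demand d E M r u := by linarith [hct u, hu.2]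
  have hinc := le_income (v := u) (c := weight d E ct M r u) hd hunif (hnash.2.1.ransom_nonneg hct)
    fun _ _ _ _ u' _ => hmin u' (mem_univ u')
  have hU := hnash.utility_eq_neg_demand hd hunif hhit hu.1
  rw [hnash.2.1.sum_ransom hu.1, weight, if_pos hu, div_mul_eq_mul_div, div_le_iff₀ hDu] at hinc
  rw [vertexUtility_of_mem hu.1, min_eq_right hu.2.le] at hU
  -- ... whose income `2 c̃ - D` would be at least `c̃² / D`, i.e. `(D - c̃)² ≤ 0`
  nlinarith

theorem IsNashEq.clubLoad_le_of_split (hnash : IsNashEq d E C T ct M r₀) (hd : 2 ≤ d)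
    (hunif : ∀ S ∈ E, S.card = d) (hhit : ∀ S ∈ E, (M ∩ S).Nonempty) {v : V} (hv : v ∉ M)
    {ρ : Finset V → ℝ} (hρ0 : ∀ S, 0 ≤ ρ S) (hρE : ∀ S, v ∉ S ∨ S ∉ E → ρ S = 0)
    (hρ1 : ∑ S ∈ E.filter (v ∈ ·), ρ S = 1)
    (hρle : ∀ u, clubLoad E M (ransom ct r₀) v * ∑ S ∈ E.filter (u ∈ ·), ρ S ≤
      clubLoad E M (ransom ct r₀) u) :
    clubLoad E M (ransom ct r₀) v ≤ d * ct v := by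
  have hct := hnash.1.1
  have hr := hnash.2.1.ransom_nonneg hct
  have hload := hnash.2.1.clubLoad_eq (ct := ct) hd
  have hd1 : (0 : ℝ) < d - 1 := by linarith [show (2 : ℝ) ≤ d by exact_mod_cast hd]
  by_contra! hL
  have hLv := hload v
  rw [if_neg hv, add_zero] at hLv
  have hval := hnash.2.1.update_insert hρ0 hρE hρ1
  have hr' : ∀ m, m ≠ v → ransom ct (Function.update r₀ v ρ) m = ransom ct r₀ m :=
    fun m hm => ransom_update_of_ne hm ρ
  have hr'v : ∀ S, ransom ct (Function.update r₀ v ρ) v S = ρ S * ct v := fun S => by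
    simp [ransom]
  -- a mafioso `u` gets at most a share `c̃(v) / L(v) < 1 / d` of its club load as new demand
  have hgain : ∀ u, d * ∑ S ∈ E.filter (u ∈ ·), ransom ct (Function.update r₀ v ρ) v S ≤
      (d - 1) * demand d E M (ransom ct r₀) u + ct u := by
    intro u
    have hLu : clubLoad E M (ransom ct r₀) u ≤
        (d - 1) * demand d E M (ransom ct r₀) u + ct u := by
      rw [hload u]
      split_ifs <;> linarith [hct u]
    have hρu : 0 ≤ ∑ S ∈ E.filter (u ∈ ·), ρ S := sum_nonneg fun S _ => hρ0 S
    simp only [hr'v, ← sum_mul]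
    calc _ = (∑ S ∈ E.filter (u ∈ ·), ρ S) * (d * ct v) := by ring
      _ ≤ (∑ S ∈ E.filter (u ∈ ·), ρ S) * clubLoad E M (ransom ct r₀) v :=
        mul_le_mul_of_nonneg_left hL.le hρu
      _ ≤ _ := by linarith [hρle u]
  have hM : ∀ u, u ≠ v → (u ∈ insert v M ↔ u ∈ M) := fun u hu => by simp [hu]
  have hle := hnash.utility_update_le hM hval
  have hlt : ct v < demand d E M (ransom ct r₀) v := by
    by_contra! h
    nlinarith [mul_le_mul_of_nonneg_left h hd1.le, hct v]
  rw [vertexUtility_of_mem (mem_insert_self v M), vertexUtility_of_notMem hv hhit,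
    demand_congr hM hr', min_eq_right hlt.le] at hle
  have hinc := le_income (v := v) (c := ((d : ℝ) - 2) / (d - 1)) hd hunif
    (hval.ransom_nonneg hct) fun _ _ _ _ u hu => le_weight_insert hd hv (ne_of_mem_erase hu) hr'
      (fun S hvS => by rw [hr'v, hρE S (Or.inl hvS), zero_mul])
      (fun hu => hnash.demand_le_of_mem hd hunif hhit hu) (demand_nonneg hd hr u) (hgain u)
  rw [hval.sum_ransom (mem_insert_self v M), div_mul_eq_mul_div, div_le_iff₀ hd1] at hinc
  nlinarith

theorem IsNashEq.clubLoad_le (hnash : IsNashEq d E C T ct M r₀) (hd : 2 ≤ d)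
    (hunif : ∀ S ∈ E, S.card = d) (hhit : ∀ S ∈ E, (M ∩ S).Nonempty) (u : V) :
    clubLoad E M (ransom ct r₀) u ≤ d * ct u := by
  have hr := hnash.2.1.ransom_nonneg hnash.1.1
  by_cases hu : u ∈ M
  · rw [hnash.2.1.clubLoad_eq hd, if_pos hu]
    have hd1 : (0 : ℝ) ≤ d - 1 := by linarith [show (2 : ℝ) ≤ d by exact_mod_cast hd]
    nlinarith [hnash.demand_le_of_mem hd hunif hhit hu]
  rcases (clubLoad_nonneg (E := E) (M := M) hr u).eq_or_lt with h0 | hpos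
  · rw [← h0]
    exact mul_nonneg d.cast_nonneg (hnash.1.1 u)
  exact hnash.clubLoad_le_of_split hd hunif hhit hu (proportionalSplit_nonneg hr)
    (fun _ => proportionalSplit_eq_zero) (sum_proportionalSplit hpos.ne')
    (mul_sum_proportionalSplit_le hr)

end Equilibrium

variable [Fintype V] [DecidableEq V]

/-- in any pure Nash equilibrium `(M, ct, r₀)` of the Submodular Mafia
Hitting Set Game, `M` is a hitting set, `∑_{v∈M} ct v = C M`, and `C M ≤ d·C M*` for every
hitting set `M*` (price of anarchy at most `d`). -/
theorem stmt_19 (d : ℕ) (hd : 2 ≤ d) (E : Finset (Finset V))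
    (hunif : ∀ S ∈ E, S.card = d)
    (C : Finset V → ℝ)
    (hmono : ∀ ⦃X Y : Finset V⦄, X ⊆ Y → C X ≤ C Y)
    (hsub : ∀ X Y : Finset V, C (X ∩ Y) + C (X ∪ Y) ≤ C X + C Y)
    (hempty : C ∅ = 0)
    (T : ℝ) (hT : 2 * C Finset.univ < T)
    (ct : V → ℝ) (M : Finset V) (r₀ : V → Finset V → ℝ)
    (hnash : IsNashEq d E C T ct M r₀) :
    (∀ S ∈ E, (M ∩ S).Nonempty) ∧
      (∑ v ∈ M, ct v = C M) ∧
      ∀ Mstar : Finset V, (∀ S ∈ E, (Mstar ∩ S).Nonempty) → C M ≤ d * C Mstar := by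
  have hhit := hnash.hits hd hunif hT
  have hsum := hnash.sum_eq hmono hsub hempty
  refine ⟨hhit, hsum, fun Mstar hMstar => ?_⟩
  have hr := hnash.2.1.ransom_nonneg hnash.1.1
  calc C M = ∑ S ∈ E, ∑ m ∈ M ∩ S, ransom ct r₀ m S := by
        rw [← hsum, sum_sum_inter_comm]
        exact (sum_congr rfl fun m hm => hnash.2.1.sum_ransom hm).symm
    _ ≤ ∑ y ∈ Mstar, clubLoad E M (ransom ct r₀) y :=
        sum_le_sum_sum_filter_of_hitting hMstar fun S _ => sum_nonneg fun m _ => hr m S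
    _ ≤ ∑ y ∈ Mstar, d * ct y := sum_le_sum fun y _ => hnash.clubLoad_le hd hunif hhit y
    _ = d * ∑ y ∈ Mstar, ct y := (mul_sum _ _ _).symm
    _ ≤ d * C Mstar := mul_le_mul_of_nonneg_left (hnash.1.sum_le Mstar) (Nat.cast_nonneg d)

end MafiaSub
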